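/- arXiv:1207.0590 — 3 statements merged into one kernel-verified Lean document; each statement's English description precedes it below -/
import Mathlib

section
/- For hermitean positive semidefinite n×n complex matrices A, B, C, the matrix A(Tr(BC) I − BC) + C(Tr(BA) I − BA) is positive semidefinite. -/
/-!
Write `A = RᴴR`, `B = SᴴS`, `C = TᴴT` and put `P = S Rᴴ`, `Q = S Tᴴ`, `u = R x`, `v = T x`.
Then `Tr(BA) = ‖P‖²` and `Tr(BC) = ‖Q‖²` (Frobenius norms), `x⋆Ax = ‖u‖²`, `x⋆Cx = ‖v‖²` and
`x⋆ABCx = ⟪Pu, Qv⟫`, so the quadratic form of the matrix at `x` is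
`‖Q‖²‖u‖² + ‖P‖²‖v‖² - 2 Re ⟪Pu, Qv⟫`. This is nonnegative by Cauchy–Schwarz,
`‖Pu‖ ≤ ‖P‖ ‖u‖` and `2ab ≤ a² + b²`.
-/

open Matrix
open scoped ComplexOrder

namespace Matrix

variable {𝕜 j k l m n : Type*} [RCLike 𝕜] [Fintype j] [Fintype k] [Fintype l] [Fintype m]
  [Fintype n]

open scoped MatrixOrder in
lemma PosSemidef.exists_eq_conjTranspose_mul_self {A : Matrix n n 𝕜} (hA : A.PosSemidef) :
    ∃ R : Matrix n n 𝕜, A = Rᴴ * R := by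
  classical
  exact CStarAlgebra.nonneg_iff_eq_star_mul_self.mp hA.nonneg

lemma star_mulVec_dotProduct_mulVec (M : Matrix k m 𝕜) (N : Matrix k n 𝕜) (x : m → 𝕜)
    (y : n → 𝕜) :
    star (M *ᵥ x) ⬝ᵥ (N *ᵥ y) = star x ⬝ᵥ ((Mᴴ * N) *ᵥ y) := by
  rw [star_mulVec, dotProduct_mulVec, vecMul_vecMul, dotProduct_mulVec]

lemma star_dotProduct_self_eq_norm_sq (u : n → 𝕜) :
    star u ⬝ᵥ u = ((‖WithLp.toLp 2 u‖ ^ 2 : ℝ) : 𝕜) := by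
  rw [RCLike.ofReal_pow, ← inner_self_eq_norm_sq_to_K, EuclideanSpace.inner_toLp_toLp,
    dotProduct_comm]

open scoped Matrix.Norms.Frobenius

lemma trace_conjTranspose_mul_self_eq_frobenius_norm_sq (P : Matrix m n 𝕜) :
    (Pᴴ * P).trace = ((‖P‖ ^ 2 : ℝ) : 𝕜) := by
  rw [frobenius_norm_def, ← Real.sqrt_eq_rpow, Real.sq_sqrt (by positivity), Finset.sum_comm]
  simp [trace, mul_apply, RCLike.conj_mul]

lemma frobenius_norm_mulVec (P : Matrix m n 𝕜) (u : n → 𝕜) :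
    ‖WithLp.toLp 2 (P *ᵥ u)‖ ≤ ‖P‖ * ‖WithLp.toLp 2 u‖ := by
  simpa only [← frobenius_norm_replicateCol (ι := Unit), replicateCol_mulVec] using
    frobenius_norm_mul P (replicateCol Unit u)

lemma star_mulVec_dotProduct_add_swap_le (P : Matrix k m 𝕜) (Q : Matrix k n 𝕜) (u : m → 𝕜)
    (v : n → 𝕜) :
    star (P *ᵥ u) ⬝ᵥ (Q *ᵥ v) + star (Q *ᵥ v) ⬝ᵥ (P *ᵥ u)
      ≤ (Qᴴ * Q).trace * (star u ⬝ᵥ u) + (Pᴴ * P).trace * (star v ⬝ᵥ v) := by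
  set w := star (P *ᵥ u) ⬝ᵥ (Q *ᵥ v)
  have hw : w = inner 𝕜 (WithLp.toLp 2 (P *ᵥ u)) (WithLp.toLp 2 (Q *ᵥ v)) := by
    rw [EuclideanSpace.inner_toLp_toLp, dotProduct_comm]
  have hw_norm : ‖w‖ ≤ ‖P‖ * ‖WithLp.toLp 2 u‖ * (‖Q‖ * ‖WithLp.toLp 2 v‖) :=
    hw ▸ (norm_inner_le_norm _ _).trans
      (mul_le_mul (frobenius_norm_mulVec P u) (frobenius_norm_mulVec Q v) (norm_nonneg _)
        (by positivity))
  have hswap : star (Q *ᵥ v) ⬝ᵥ (P *ᵥ u) = star w := star_dotProduct _ _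
  rw [hswap, RCLike.star_def, RCLike.add_conj, trace_conjTranspose_mul_self_eq_frobenius_norm_sq,
    trace_conjTranspose_mul_self_eq_frobenius_norm_sq, star_dotProduct_self_eq_norm_sq,
    star_dotProduct_self_eq_norm_sq]
  norm_cast
  nlinarith [RCLike.re_le_norm w, sq_nonneg (‖Q‖ * ‖WithLp.toLp 2 u‖ - ‖P‖ * ‖WithLp.toLp 2 v‖)]

lemma trace_conjTranspose_mul_self_mul_conjTranspose_mul_self (S : Matrix k n 𝕜)
    (T : Matrix m n 𝕜) : (Sᴴ * S * (Tᴴ * T)).trace = ((S * Tᴴ)ᴴ * (S * Tᴴ)).trace := by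
  simp only [conjTranspose_mul, conjTranspose_conjTranspose, Matrix.mul_assoc]
  rw [trace_mul_comm T]
  simp only [Matrix.mul_assoc]

lemma posSemidef_trace_smul_add_trace_smul_sub (R : Matrix k n 𝕜) (T : Matrix l n 𝕜)
    (P : Matrix j k 𝕜) (Q : Matrix j l 𝕜) :
    ((Qᴴ * Q).trace • (Rᴴ * R) + (Pᴴ * P).trace • (Tᴴ * T)
      - ((P * R)ᴴ * (Q * T) + (Q * T)ᴴ * (P * R))).PosSemidef := by
  refine .of_dotProduct_mulVec_nonneg ?_ fun x ↦ ?_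
  · simp only [IsHermitian, conjTranspose_sub, conjTranspose_add, conjTranspose_smul,
      conjTranspose_mul, conjTranspose_conjTranspose,
      trace_conjTranspose_mul_self_eq_frobenius_norm_sq, RCLike.star_def, RCLike.conj_ofReal]
    abel
  · simp only [sub_mulVec, add_mulVec, smul_mulVec, dotProduct_sub, dotProduct_add,
      dotProduct_smul, smul_eq_mul, ← star_mulVec_dotProduct_mulVec]
    simp only [← mulVec_mulVec]
    exact sub_nonneg.mpr (star_mulVec_dotProduct_add_swap_le P Q (R *ᵥ x) (T *ᵥ x))

end Matrix

theorem lms_matrix_inequality_one {n : ℕ} (A B C : Matrix (Fin n) (Fin n) ℂ)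
    (hA : A.PosSemidef) (hB : B.PosSemidef) (hC : C.PosSemidef) :
    (A * ((B * C).trace • (1 : Matrix (Fin n) (Fin n) ℂ) - B * C)
      + C * ((B * A).trace • (1 : Matrix (Fin n) (Fin n) ℂ) - B * A)).PosSemidef := by
  obtain ⟨R, rfl⟩ := hA.exists_eq_conjTranspose_mul_self
  obtain ⟨S, rfl⟩ := hB.exists_eq_conjTranspose_mul_self
  obtain ⟨T, rfl⟩ := hC.exists_eq_conjTranspose_mul_self
  simp only [trace_conjTranspose_mul_self_mul_conjTranspose_mul_self]
  refine (congrArg PosSemidef ?_).mpr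
    (posSemidef_trace_smul_add_trace_smul_sub R T (S * Rᴴ) (S * Tᴴ))
  simp only [conjTranspose_mul, conjTranspose_conjTranspose, mul_sub, Matrix.mul_smul, mul_one,
    mul_assoc]
  abel
end

section
/- For hermitean positive semidefinite n×n complex matrices A, B, C, the matrix (Tr(AB) I − AB)C + (Tr(CB) I − CB)A is positive semidefinite. -/
/-!
Write `t₁ = Tr(AB)`, `t₂ = Tr(CB)`; the matrix is `t₂ A + t₁ C - (ABC + CBA)`. A positive
semidefinite `P` satisfies `P ≤ Tr(P) I`; applied to `P = N B N*` where `A = N* N` and conjugated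
by `N`, this gives `ABA ≤ t₁ A`, and likewise `CBC ≤ t₂ C`. Expanding
`(t₂ A - t₁ C) B (t₂ A - t₁ C) ≥ 0` then yields
`t₁ t₂ (ABC + CBA) ≤ t₂² ABA + t₁² CBC ≤ t₁ t₂ (t₂ A + t₁ C)`. If `t₁ = 0` then `AB = 0`, so the
cross terms vanish; similarly if `t₂ = 0`.
-/

open Matrix
open scoped ComplexOrder MatrixOrder

section StarOrderedAlgebra

variable {𝕜 R : Type*} [RCLike 𝕜] [Ring R] [StarRing R] [PartialOrder R] [StarOrderedRing R]
  [Algebra 𝕜 R] [StarModule 𝕜 R]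

theorem star_mul_mul_add_star_mul_mul_le {p : R} (hp : 0 ≤ p) (x y : R) :
    star x * p * y + star y * p * x ≤ star x * p * x + star y * p * y := by
  rw [← sub_nonneg]
  convert star_left_conjugate_nonneg hp (x - y) using 1
  simp only [star_sub, sub_mul, mul_sub]
  abel

theorem mul_mul_add_mul_mul_le_smul_add_smul {a c p : R} {s t : 𝕜} (hp : 0 ≤ p)
    (ha : IsSelfAdjoint a) (hc : IsSelfAdjoint c) (hs : 0 < s) (ht : 0 < t)
    (hap : a * p * a ≤ s • a) (hcp : c * p * c ≤ t • c) :
    a * p * c + c * p * a ≤ t • a + s • c := by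
  have hs' : star s = s := (IsSelfAdjoint.of_nonneg hs.le).star_eq
  have ht' : star t = t := (IsSelfAdjoint.of_nonneg ht.le).star_eq
  have key : (t * s) • (a * p * c + c * p * a) ≤ (t * s) • (t • a + s • c) :=
    calc (t * s) • (a * p * c + c * p * a)
        ≤ (t * t) • (a * p * a) + (s * s) • (c * p * c) := by
          simpa only [star_smul, ha.star_eq, hc.star_eq, hs', ht', smul_mul_assoc, mul_smul_comm,
            smul_smul, mul_comm s t, smul_add] using
            star_mul_mul_add_star_mul_mul_le hp (t • a) (s • c)
      _ ≤ (t * t) • (s • a) + (s * s) • (t • c) := by gcongr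
      _ = (t * s) • (t • a + s • c) := by
          simp only [smul_add, smul_smul]; congr 2 <;> ring
  have hts : 0 < t * s := mul_pos ht hs
  simpa only [smul_smul, inv_mul_cancel₀ hts.ne', one_smul] using
    smul_le_smul_of_nonneg_left key (RCLike.inv_pos_of_pos hts).le

end StarOrderedAlgebra

namespace Matrix

variable {𝕜 ι : Type*} [RCLike 𝕜] [Fintype ι] {A B : Matrix ι ι 𝕜}

theorem PosSemidef.le_trace_smul_one [DecidableEq ι] (hA : A.PosSemidef) : A ≤ A.trace • 1 := by
  have htr : A.trace = ((∑ i, hA.1.eigenvalues i : ℝ) : 𝕜) := by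
    rw [hA.1.trace_eq_sum_eigenvalues]; push_cast; rfl
  rw [htr, ← RCLike.real_smul_eq_coe_smul, ← Algebra.algebraMap_eq_smul_one]
  refine le_algebraMap_of_spectrum_le ?_ hA.1
  rw [hA.1.spectrum_real_eq_range_eigenvalues]
  rintro _ ⟨i, rfl⟩
  exact Finset.single_le_sum (fun j _ => hA.eigenvalues_nonneg j) (Finset.mem_univ i)

theorem PosSemidef.mul_mul_le_trace_mul_smul (hA : A.PosSemidef) (hB : B.PosSemidef) :
    A * B * A ≤ (A * B).trace • A := by
  classical
  obtain ⟨N, rfl⟩ := CStarAlgebra.nonneg_iff_eq_star_mul_self.mp hA.nonneg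
  have h := star_left_conjugate_le_conjugate (hB.mul_mul_conjTranspose_same N).le_trace_smul_one N
  rw [trace_mul_cycle, ← star_eq_conjTranspose] at h
  simpa only [mul_assoc, mul_smul_comm, smul_mul_assoc, mul_one] using h

theorem trace_star_mul_self_mul_star_mul_self (N W : Matrix ι ι 𝕜) :
    (star N * N * (star W * W)).trace = (star (W * star N) * (W * star N)).trace := by
  simp only [star_mul, star_star, ← mul_assoc]
  rw [← trace_mul_comm (star N)]
  simp only [mul_assoc]

theorem PosSemidef.trace_mul_nonneg (hA : A.PosSemidef) (hB : B.PosSemidef) :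
    0 ≤ (A * B).trace := by
  classical
  obtain ⟨N, rfl⟩ := CStarAlgebra.nonneg_iff_eq_star_mul_self.mp hA.nonneg
  obtain ⟨W, rfl⟩ := CStarAlgebra.nonneg_iff_eq_star_mul_self.mp hB.nonneg
  rw [trace_star_mul_self_mul_star_mul_self]
  exact (posSemidef_conjTranspose_mul_self _).trace_nonneg

theorem PosSemidef.mul_eq_zero_of_trace_mul_eq_zero (hA : A.PosSemidef) (hB : B.PosSemidef)
    (h : (A * B).trace = 0) : A * B = 0 := by
  classical
  obtain ⟨N, rfl⟩ := CStarAlgebra.nonneg_iff_eq_star_mul_self.mp hA.nonneg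
  obtain ⟨W, rfl⟩ := CStarAlgebra.nonneg_iff_eq_star_mul_self.mp hB.nonneg
  rw [trace_star_mul_self_mul_star_mul_self] at h
  have hWN : W * star N = 0 := trace_conjTranspose_mul_self_eq_zero_iff.mp h
  calc star N * N * (star W * W) = star N * star (W * star N) * W := by
        simp only [star_mul, star_star, mul_assoc]
    _ = 0 := by rw [hWN, star_zero, mul_zero, zero_mul]

theorem PosSemidef.mul_mul_add_mul_mul_eq_zero_of_trace_mul_eq_zero (hA : A.PosSemidef)
    (hB : B.PosSemidef) (h : (A * B).trace = 0) (C : Matrix ι ι 𝕜) :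
    A * B * C + C * B * A = 0 := by
  have hAB := hA.mul_eq_zero_of_trace_mul_eq_zero hB h
  have hBA : B * A = 0 := by
    simpa only [conjTranspose_mul, hA.isHermitian.eq, hB.isHermitian.eq, conjTranspose_zero]
      using congrArg (·ᴴ) hAB
  rw [hAB, mul_assoc, hBA, zero_mul, mul_zero, add_zero]

end Matrix

theorem lms_matrix_inequality_two {n : ℕ} (A B C : Matrix (Fin n) (Fin n) ℂ)
    (hA : A.PosSemidef) (hB : B.PosSemidef) (hC : C.PosSemidef) :
    (((A * B).trace • (1 : Matrix (Fin n) (Fin n) ℂ) - A * B) * C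
      + ((C * B).trace • (1 : Matrix (Fin n) (Fin n) ℂ) - C * B) * A).PosSemidef := by
  have hM : ((A * B).trace • 1 - A * B) * C + ((C * B).trace • 1 - C * B) * A
      = (C * B).trace • A + (A * B).trace • C - (A * B * C + C * B * A) := by
    simp only [sub_mul, smul_mul_assoc, one_mul]
    abel
  rw [hM, ← le_iff]
  have hRHS : 0 ≤ (C * B).trace • A + (A * B).trace • C :=
    add_nonneg (smul_nonneg (hC.trace_mul_nonneg hB) hA.nonneg)
      (smul_nonneg (hA.trace_mul_nonneg hB) hC.nonneg)
  rcases (hA.trace_mul_nonneg hB).eq_or_lt with h₁ | h₁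
  · rwa [hA.mul_mul_add_mul_mul_eq_zero_of_trace_mul_eq_zero hB h₁.symm]
  rcases (hC.trace_mul_nonneg hB).eq_or_lt with h₂ | h₂
  · rwa [add_comm, hC.mul_mul_add_mul_mul_eq_zero_of_trace_mul_eq_zero hB h₂.symm]
  exact mul_mul_add_mul_mul_le_smul_add_smul hB.nonneg hA.isHermitian hC.isHermitian h₁ h₂
    (hA.mul_mul_le_trace_mul_smul hB) (hC.mul_mul_le_trace_mul_smul hB)
end

section
/- The truncation map sending a hermitean 2×2 matrix ρ = (1/2)(f I + s·σ) to R = (1/2)(F I + Σ·σ), where F = min(max(f,0),2) and Σ = s if s·s ≤ min(F²,(2−F)²), else Σ = min(F,2−F) s/|s|, is Lipschitz continuous with respect to the Frobenius norm on the set where it is defined (e.g., restricted to s ≠ 0 or interpreting Σ = 0 when s = 0). -/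
open Matrix

noncomputable def pauli : Fin 3 → Matrix (Fin 2) (Fin 2) ℂ :=
  ![!![0, 1; 1, 0], !![0, Complex.I; -Complex.I, 0], !![1, 0; 0, -1]]

noncomputable def dotPauli (v : Fin 3 → ℝ) : Matrix (Fin 2) (Fin 2) ℂ :=
  ∑ i : Fin 3, (v i : ℂ) • pauli i

/-- The matrix `(1/2)(f I + s·σ)` associated to `(f, s) ∈ ℝ × ℝ³`. -/
noncomputable def mkRho (f : ℝ) (s : Fin 3 → ℝ) : Matrix (Fin 2) (Fin 2) ℂ :=
  (2⁻¹ : ℂ) • ((f : ℂ) • (1 : Matrix (Fin 2) (Fin 2) ℂ) + dotPauli s)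

/-- Truncated number density `F = min(max(f,0),2)`. -/
noncomputable def truncF (f : ℝ) : ℝ := min (max f 0) 2

/-- Truncated spin vector, interpreted as `0` when `s = 0` (division by `|s| = 0`). -/
noncomputable def truncS (f : ℝ) (s : Fin 3 → ℝ) : Fin 3 → ℝ :=
  if s ⬝ᵥ s ≤ min (truncF f ^ 2) ((2 - truncF f) ^ 2) then s
  else (min (truncF f) (2 - truncF f) / Real.sqrt (s ⬝ᵥ s)) • s

/-- Frobenius norm of a 2×2 complex matrix. -/
noncomputable def frob (M : Matrix (Fin 2) (Fin 2) ℂ) : ℝ :=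
  Real.sqrt (∑ i : Fin 2, ∑ j : Fin 2, ‖M i j‖ ^ 2)

/-!
In the coordinates `ρ ↔ (f, s)` the map `ρ ↦ mkRho f s` is linear and
`frob (mkRho f s) ^ 2 = (f ^ 2 + |s| ^ 2) / 2`, so it suffices to control the truncation in
these coordinates. `F` is a clamp, hence `|ΔF| ≤ |Δf|`. `Σ` is the nearest-point projection of
`s` onto the closed ball of radius `r(f) = min(F, 2 - F)`; this projection is `1`-Lipschitz in
the point (as is every projection onto a closed convex set) and in the radius, and `r` is
`1`-Lipschitz in `f`, so `|ΔΣ| ≤ |Δf| + |Δs|`. Together this gives the Lipschitz constant `2`.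
-/

section BallRetraction

variable {E : Type*}

section Normed

variable [NormedAddCommGroup E] [NormedSpace ℝ E]

noncomputable def ballRetraction (r : ℝ) (x : E) : E :=
  if ‖x‖ ≤ r then x else (r / ‖x‖) • x

theorem ballRetraction_eq_smul (r : ℝ) (x : E) :
    ballRetraction r x = (min ‖x‖ r / ‖x‖) • x := by
  unfold ballRetraction
  split_ifs with hx
  · rcases eq_or_ne x 0 with rfl | hx0
    · simp
    · rw [min_eq_left hx, div_self (norm_ne_zero_iff.2 hx0), one_smul]
  · rw [min_eq_right (not_le.1 hx).le]

theorem norm_ballRetraction_le {r : ℝ} (hr : 0 ≤ r) (x : E) : ‖ballRetraction r x‖ ≤ r := by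
  rw [ballRetraction_eq_smul, norm_smul, Real.norm_of_nonneg (by positivity)]
  rcases eq_or_ne ‖x‖ 0 with hx | hx
  · simpa [hx] using hr
  · rw [div_mul_cancel₀ _ hx]
    exact min_le_right _ _

theorem norm_ballRetraction_sub_ballRetraction_le (r s : ℝ) (x : E) :
    ‖ballRetraction r x - ballRetraction s x‖ ≤ |r - s| := by
  rw [ballRetraction_eq_smul, ballRetraction_eq_smul, ← sub_smul, ← sub_div, norm_smul,
    Real.norm_eq_abs, abs_div, abs_norm]
  rcases eq_or_ne ‖x‖ 0 with hx | hx
  · simp [hx]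
  · rw [div_mul_cancel₀ _ hx]
    simpa using abs_min_sub_min_le_max ‖x‖ r ‖x‖ s

end Normed

section InnerProduct

variable [NormedAddCommGroup E] [InnerProductSpace ℝ E]

open RealInnerProductSpace

-- The variational inequality characterising `ballRetraction r x` as the point of the ball
-- nearest to `x`.
theorem inner_sub_ballRetraction_nonpos {r : ℝ} (x : E) {z : E} (hz : ‖z‖ ≤ r) :
    ⟪x - ballRetraction r x, z - ballRetraction r x⟫ ≤ 0 := by
  unfold ballRetraction
  split_ifs with hx
  · simp
  · have hx0 : 0 < ‖x‖ := (norm_nonneg z).trans_lt (hz.trans_lt (not_le.1 hx))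
    set c := r / ‖x‖ with hc_def
    have hc : c ≤ 1 := (div_le_one hx0).2 (not_le.1 hx).le
    have hxz : ⟪x, z⟫ ≤ c * ‖x‖ ^ 2 :=
      calc ⟪x, z⟫ ≤ ‖x‖ * ‖z‖ := real_inner_le_norm x z
        _ ≤ ‖x‖ * r := by gcongr
        _ = c * ‖x‖ ^ 2 := by rw [hc_def]; field_simp
    rw [show x - c • x = (1 - c) • x by rw [sub_smul, one_smul], real_inner_smul_left,
      inner_sub_right, real_inner_smul_right, real_inner_self_eq_norm_sq]
    exact mul_nonpos_of_nonneg_of_nonpos (by linarith) (by linarith)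

theorem norm_sub_le_of_inner_sub_nonpos {a b p q : E} (hp : ⟪a - p, q - p⟫ ≤ 0)
    (hq : ⟪b - q, p - q⟫ ≤ 0) : ‖p - q‖ ≤ ‖a - b‖ := by
  have hsplit : ⟪a - b, p - q⟫ - ‖p - q‖ ^ 2 = -⟪a - p, q - p⟫ - ⟪b - q, p - q⟫ := by
    rw [← real_inner_self_eq_norm_sq, ← inner_sub_left,
      show a - b - (p - q) = (a - p) - (b - q) by abel, inner_sub_left, ← neg_sub q p,
      inner_neg_right]
  have key : ‖p - q‖ ^ 2 ≤ ‖a - b‖ * ‖p - q‖ :=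
    calc ‖p - q‖ ^ 2 ≤ ⟪a - b, p - q⟫ := by linarith
      _ ≤ ‖a - b‖ * ‖p - q‖ := real_inner_le_norm _ _
  nlinarith [norm_nonneg (p - q), norm_nonneg (a - b)]

theorem lipschitzWith_ballRetraction {r : ℝ} (hr : 0 ≤ r) :
    LipschitzWith 1 (ballRetraction r : E → E) :=
  lipschitzWith_iff_norm_sub_le.2 fun x y => by
    rw [NNReal.coe_one, one_mul]
    exact norm_sub_le_of_inner_sub_nonpos
      (inner_sub_ballRetraction_nonpos x (norm_ballRetraction_le hr y))
      (inner_sub_ballRetraction_nonpos y (norm_ballRetraction_le hr x))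

theorem norm_ballRetraction_sub_ballRetraction_le_abs_add {r s : ℝ} (hs : 0 ≤ s) (x y : E) :
    ‖ballRetraction r x - ballRetraction s y‖ ≤ |r - s| + ‖x - y‖ :=
  calc ‖ballRetraction r x - ballRetraction s y‖
      ≤ ‖ballRetraction r x - ballRetraction s x‖ + ‖ballRetraction s x - ballRetraction s y‖ :=
        norm_sub_le_norm_sub_add_norm_sub _ _ _
    _ ≤ |r - s| + ‖x - y‖ := by
        gcongr
        · exact norm_ballRetraction_sub_ballRetraction_le r s x
        · simpa using (lipschitzWith_ballRetraction hs).norm_sub_le x y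

end InnerProduct

end BallRetraction

local notation "ℝ³" => EuclideanSpace ℝ (Fin 3)

theorem dotProduct_self_eq_norm_toLp_sq (s : Fin 3 → ℝ) :
    s ⬝ᵥ s = ‖(WithLp.toLp 2 s : ℝ³)‖ ^ 2 := by
  rw [EuclideanSpace.real_norm_sq_eq]
  simp [dotProduct, sq]

theorem truncF_nonneg (f : ℝ) : 0 ≤ truncF f := le_min (le_max_right f 0) zero_le_two

theorem truncF_le_two (f : ℝ) : truncF f ≤ 2 := min_le_right _ _

theorem abs_truncF_sub_truncF_le (f g : ℝ) : |truncF f - truncF g| ≤ |f - g| :=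
  (abs_min_sub_min_le_max (max f 0) 2 (max g 0) 2).trans
    (max_le (abs_max_sub_max_le_abs f g 0) (by simp))

noncomputable def spinRadius (f : ℝ) : ℝ := min (truncF f) (2 - truncF f)

theorem spinRadius_nonneg (f : ℝ) : 0 ≤ spinRadius f :=
  le_min (truncF_nonneg f) (sub_nonneg.2 (truncF_le_two f))

theorem min_sq_truncF_eq_spinRadius_sq (f : ℝ) :
    min (truncF f ^ 2) ((2 - truncF f) ^ 2) = spinRadius f ^ 2 := by
  have h₂ : 0 ≤ 2 - truncF f := sub_nonneg.2 (truncF_le_two f)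
  rcases le_total (truncF f) (2 - truncF f) with h | h
  · rw [spinRadius, min_eq_left h, min_eq_left (pow_le_pow_left₀ (truncF_nonneg f) h 2)]
  · rw [spinRadius, min_eq_right h, min_eq_right (pow_le_pow_left₀ h₂ h 2)]

theorem abs_spinRadius_sub_spinRadius_le (f g : ℝ) :
    |spinRadius f - spinRadius g| ≤ |f - g| := by
  refine (abs_min_sub_min_le_max _ _ _ _).trans (max_le (abs_truncF_sub_truncF_le f g) ?_)
  rw [sub_sub_sub_cancel_left, abs_sub_comm]
  exact abs_truncF_sub_truncF_le f g

theorem toLp_truncS (f : ℝ) (s : Fin 3 → ℝ) :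
    WithLp.toLp 2 (truncS f s) = ballRetraction (spinRadius f) (WithLp.toLp 2 s : ℝ³) := by
  have hsq := dotProduct_self_eq_norm_toLp_sq s
  have hcond : s ⬝ᵥ s ≤ min (truncF f ^ 2) ((2 - truncF f) ^ 2) ↔
      ‖(WithLp.toLp 2 s : ℝ³)‖ ≤ spinRadius f := by
    rw [min_sq_truncF_eq_spinRadius_sq, hsq, sq_le_sq₀ (norm_nonneg _) (spinRadius_nonneg f)]
  unfold truncS ballRetraction
  split_ifs with h₁ h₂ h₂
  · rfl
  · exact absurd (hcond.1 h₁) h₂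
  · exact absurd (hcond.2 h₂) h₁
  · rw [hsq, Real.sqrt_sq (norm_nonneg _)]
    rfl

theorem norm_toLp_truncS_sub_truncS_le (f₁ f₂ : ℝ) (s₁ s₂ : Fin 3 → ℝ) :
    ‖(WithLp.toLp 2 (truncS f₁ s₁ - truncS f₂ s₂) : ℝ³)‖ ≤
      |f₁ - f₂| + ‖(WithLp.toLp 2 (s₁ - s₂) : ℝ³)‖ := by
  rw [WithLp.toLp_sub, WithLp.toLp_sub, toLp_truncS, toLp_truncS]
  exact (norm_ballRetraction_sub_ballRetraction_le_abs_add (spinRadius_nonneg f₂) _ _).trans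
    (add_le_add_left (abs_spinRadius_sub_spinRadius_le f₁ f₂) _)

theorem mkRho_sub_mkRho (f g : ℝ) (s t : Fin 3 → ℝ) :
    mkRho f s - mkRho g t = mkRho (f - g) (s - t) := by
  simp only [mkRho, dotPauli, ← smul_sub, Pi.sub_apply, Complex.ofReal_sub, sub_smul,
    Finset.sum_sub_distrib, add_sub_add_comm]

open Complex in
theorem mkRho_eq (f : ℝ) (s : Fin 3 → ℝ) :
    mkRho f s = (2⁻¹ : ℂ) • !![(f + s 2 : ℂ), s 0 + s 1 * I; s 0 - s 1 * I, f - s 2] := by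
  ext i j
  fin_cases i <;> fin_cases j <;> simp [mkRho, dotPauli, pauli, Fin.sum_univ_three] <;> ring

theorem frob_mkRho (f : ℝ) (s : Fin 3 → ℝ) :
    frob (mkRho f s) = √((f ^ 2 + ‖(WithLp.toLp 2 s : ℝ³)‖ ^ 2) / 2) := by
  rw [frob, mkRho_eq, ← dotProduct_self_eq_norm_toLp_sq]
  congr 1
  simp only [Fin.sum_univ_two, Fin.sum_univ_three, dotProduct, Matrix.smul_apply, of_apply,
    cons_val', cons_val_zero, cons_val_one, empty_val', cons_val_fin_one, smul_eq_mul,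
    Complex.sq_norm, Complex.normSq_apply, Complex.inv_re, Complex.inv_im,
    Complex.add_re, Complex.add_im, Complex.sub_re, Complex.sub_im, Complex.mul_re, Complex.mul_im,
    Complex.ofReal_re, Complex.ofReal_im, Complex.I_re, Complex.I_im, Complex.re_ofNat,
    Complex.im_ofNat]
  ring

theorem frob_mkRho_le_two_mul {F f : ℝ} {S s : Fin 3 → ℝ} (hF : |F| ≤ |f|)
    (hS : ‖(WithLp.toLp 2 S : ℝ³)‖ ≤ |f| + ‖(WithLp.toLp 2 s : ℝ³)‖) :
    frob (mkRho F S) ≤ 2 * frob (mkRho f s) := by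
  have hF' : F ^ 2 ≤ f ^ 2 := sq_le_sq.2 hF
  have hS' : ‖(WithLp.toLp 2 S : ℝ³)‖ ^ 2 ≤ (|f| + ‖(WithLp.toLp 2 s : ℝ³)‖) ^ 2 :=
    pow_le_pow_left₀ (norm_nonneg _) hS 2
  rw [frob_mkRho, frob_mkRho]
  calc √((F ^ 2 + ‖(WithLp.toLp 2 S : ℝ³)‖ ^ 2) / 2)
      ≤ √(2 ^ 2 * ((f ^ 2 + ‖(WithLp.toLp 2 s : ℝ³)‖ ^ 2) / 2)) := by
        gcongr
        nlinarith [sq_abs f, sq_nonneg (|f| - ‖(WithLp.toLp 2 s : ℝ³)‖)]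
    _ = 2 * √((f ^ 2 + ‖(WithLp.toLp 2 s : ℝ³)‖ ^ 2) / 2) := by
        rw [Real.sqrt_mul (by positivity), Real.sqrt_sq zero_le_two]

theorem truncation_lipschitz :
    ∃ L > 0, ∀ (f₁ f₂ : ℝ) (s₁ s₂ : Fin 3 → ℝ),
      frob (mkRho (truncF f₁) (truncS f₁ s₁) - mkRho (truncF f₂) (truncS f₂ s₂)) ≤
        L * frob (mkRho f₁ s₁ - mkRho f₂ s₂) := by
  refine ⟨2, two_pos, fun f₁ f₂ s₁ s₂ => ?_⟩
  rw [mkRho_sub_mkRho, mkRho_sub_mkRho]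
  exact frob_mkRho_le_two_mul (abs_truncF_sub_truncF_le f₁ f₂)
    (norm_toLp_truncS_sub_truncS_le f₁ f₂ s₁ s₂)
end
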